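/- Let (W, S) be a Coxeter group with S finite, and let W_J be a standard parabolic subgroup (generated by a subset J ⊆ S). Let σ be an automorphism of W permuting S and stabilizing J. Then the natural map W^σ/(W_J)^σ → (W/W_J)^σ from σ-fixed elements modulo σ-fixed parabolic elements to σ-fixed cosets is a bijection. In particular, every σ-stable coset wW_J contains a σ-fixed element, namely its unique minimal-length representative. -/

import Mathlib

/-!
Let `u` be an element of minimal length in the coset `u W_J`. The action of `W` on pairs
(reflection, sign) yields inversion sets with `ℓ w = #N(w)` and the cocycle rule
`N(a * b) = b⁻¹ N(a) b ∆ N(b)`. Minimality of `u` means that no element of `W_J` is an inversion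
of `u`, while every inversion of `p ∈ W_J` lies in `W_J`; hence `ℓ (u * p) = ℓ u + ℓ p`, and `u`
is the unique element of minimal length in its coset. An automorphism `σ` permuting `S` and
stabilizing `J` does not increase length and preserves `W_J`; if the coset is `σ`-stable, `σ u`
lies in it and is no longer than `u`, hence equals `u`.
-/

namespace CoxeterSystem

open List
open scoped Classical symmDiff

theorem prod_map_alternatingWord_two_mul {B G : Type*} [Monoid G] (f : B → G) (i j : B) (m : ℕ) :
    ((alternatingWord i j (2 * m)).map f).prod = (f i * f j) ^ m := by
  induction m with
  | zero => simp [alternatingWord]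
  | succ m ih =>
    rw [show 2 * (m + 1) = 2 * m + 1 + 1 by ring, alternatingWord_succ', alternatingWord_succ',
      if_neg (Nat.not_even_two_mul_add_one m), if_pos (even_two_mul m)]
    simp [ih, pow_succ', mul_assoc]

theorem reverse_alternatingWord_two_mul {B : Type*} (i j : B) (m : ℕ) :
    (alternatingWord i j (2 * m)).reverse = alternatingWord j i (2 * m) := by
  induction m with
  | zero => simp [alternatingWord]
  | succ m ih =>
    rw [show 2 * (m + 1) = 2 * m + 1 + 1 by ring, alternatingWord_succ', alternatingWord_succ',
      if_neg (Nat.not_even_two_mul_add_one m), if_pos (even_two_mul m), alternatingWord_succ,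
      alternatingWord_succ]
    simp [ih]

variable {B W : Type*} [Group W] {M : CoxeterMatrix B} (cs : CoxeterSystem M W)

local prefix:100 "s" => cs.simple
local prefix:100 "π" => cs.wordProd
local prefix:100 "ℓ" => cs.length
local prefix:100 "ris " => cs.rightInvSeq
local prefix:100 "lis " => cs.leftInvSeq

theorem even_count_rightInvSeq_alternatingWord (i j : B) (t : W) :
    Even ((ris (alternatingWord i j (2 * M i j))).count t) := by
  have hlis : lis (alternatingWord j i (2 * M i j)) =
      (range (2 * M i j)).map fun k ↦ π alternatingWord i j (2 * k + 1) := by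
    refine List.ext_getElem (by simp) fun k _ hk ↦ ?_
    simp only [getElem_map, getElem_range]
    exact cs.getElem_leftInvSeq_alternatingWord j i (M i j) k (by simpa using hk)
  have hperiodic (k : ℕ) :
      π alternatingWord i j (2 * (M i j + k) + 1) = π alternatingWord i j (2 * k + 1) := by
    simp only [prod_alternatingWord_eq_mul_pow, Nat.not_even_two_mul_add_one, if_false,
      show ∀ n, (2 * n + 1) / 2 = n by omega, pow_add, cs.simple_mul_simple_pow i j, one_mul]
  rw [← reverse_alternatingWord_two_mul, rightInvSeq_reverse, count_reverse, hlis, two_mul,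
    range_add, map_append, count_append, map_map]
  refine ⟨_, congrArg₂ _ rfl (congrArg _ (map_congr_left fun k _ ↦ ?_))⟩
  simpa [← two_mul] using hperiodic k

/-- The classical action of `W` on pairs (reflection, sign), here on `W × ZMod 2` instead of
`T × {±1}`: a non-reflection is never conjugate to `s i`, so its sign never changes. -/
noncomputable def reflectionPerm (i : B) : Equiv.Perm (W × ZMod 2) :=
  Function.Involutive.toPerm (fun p ↦ (s i * p.1 * s i, p.2 + if p.1 = s i then 1 else 0)) <| by
    rintro ⟨t, ε⟩
    by_cases ht : t = s i <;>
      simp [ht, mul_assoc, mul_eq_one_iff_eq_inv, add_assoc, CharTwo.add_self_eq_zero]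

@[simp] theorem reflectionPerm_apply (i : B) (t : W) (ε : ZMod 2) :
    cs.reflectionPerm i (t, ε) = (s i * t * s i, ε + if t = s i then 1 else 0) := rfl

theorem prod_map_reflectionPerm_apply (ω : List B) (t : W) (ε : ZMod 2) :
    (ω.map cs.reflectionPerm).prod (t, ε) = (π ω * t * (π ω)⁻¹, ε + (ris ω).count t) := by
  induction ω with
  | nil => simp
  | cons i ω ih =>
    have hconj : π ω * t * (π ω)⁻¹ = s i ↔ (π ω)⁻¹ * s i * π ω = t := by
      constructor <;> intro h <;> rw [← h] <;> group
    rw [map_cons, prod_cons, Equiv.Perm.mul_apply, ih, reflectionPerm_apply, rightInvSeq,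
      wordProd_cons]
    simp only [count_cons, beq_iff_eq]
    refine Prod.ext (by simp [mul_assoc]) ?_
    by_cases ht : (π ω)⁻¹ * s i * π ω = t
    · simp [hconj.mpr ht, ht, add_assoc]
    · simp [mt hconj.mp ht, ht]

theorem isLiftable_reflectionPerm : M.IsLiftable cs.reflectionPerm := by
  intro i j
  have hword : π alternatingWord i j (2 * M i j) = 1 := by
    rw [wordProd, prod_map_alternatingWord_two_mul, cs.simple_mul_simple_pow]
  rw [← prod_map_alternatingWord_two_mul]
  ext ⟨t, ε⟩ : 1
  obtain ⟨c, hc⟩ := cs.even_count_rightInvSeq_alternatingWord i j t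
  rw [prod_map_reflectionPerm_apply, hword, hc, Nat.cast_add, CharTwo.add_self_eq_zero]
  simp

noncomputable def reflectionRep : W →* Equiv.Perm (W × ZMod 2) :=
  cs.lift ⟨cs.reflectionPerm, cs.isLiftable_reflectionPerm⟩

theorem reflectionRep_wordProd (ω : List B) :
    cs.reflectionRep (π ω) = (ω.map cs.reflectionPerm).prod := by
  rw [wordProd, map_list_prod, map_map]
  congr 2
  exact funext (cs.lift_apply_simple cs.isLiftable_reflectionPerm)

noncomputable def inversionParity (w t : W) : ZMod 2 := (cs.reflectionRep w (t, 0)).2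

theorem inversionParity_wordProd (ω : List B) (t : W) :
    cs.inversionParity (π ω) t = (ris ω).count t := by
  rw [inversionParity, reflectionRep_wordProd, prod_map_reflectionPerm_apply, zero_add]

theorem reflectionRep_apply (w t : W) (ε : ZMod 2) :
    cs.reflectionRep w (t, ε) = (w * t * w⁻¹, ε + cs.inversionParity w t) := by
  obtain ⟨ω, rfl⟩ := cs.wordProd_surjective w
  rw [inversionParity_wordProd, reflectionRep_wordProd, prod_map_reflectionPerm_apply]

theorem inversionParity_mul (a b t : W) :
    cs.inversionParity (a * b) t =
      cs.inversionParity a (b * t * b⁻¹) + cs.inversionParity b t := by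
  rw [inversionParity, map_mul, Equiv.Perm.mul_apply, reflectionRep_apply, reflectionRep_apply,
    zero_add, add_comm]

def inversionSet (w : W) : Set W := {t | cs.inversionParity w t = 1}

theorem inversionSet_mul (a b : W) :
    cs.inversionSet (a * b) = (MulAut.conj b ⁻¹' cs.inversionSet a) ∆ cs.inversionSet b := by
  ext t
  simp only [inversionSet, Set.mem_ofPred_eq, Set.mem_symmDiff, Set.mem_preimage,
    MulAut.conj_apply, inversionParity_mul]
  generalize cs.inversionParity a (b * t * b⁻¹) = x
  generalize cs.inversionParity b t = y
  revert x y
  decide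

theorem inversionSet_one : cs.inversionSet 1 = ∅ := by
  ext t
  simp [inversionSet, inversionParity]

theorem inversionSet_simple (i : B) : cs.inversionSet (s i) = {s i} := by
  ext t
  by_cases ht : t = s i <;> simp [inversionSet, inversionParity, reflectionRep, ht]

theorem inversionSet_wordProd {ω : List B} (hω : cs.IsReduced ω) :
    cs.inversionSet (π ω) = ((ris ω).toFinset : Set W) := by
  ext t
  by_cases ht : t ∈ ris ω <;>
    simp [inversionSet, inversionParity_wordProd, hω.nodup_rightInvSeq.count, ht]

theorem length_eq_ncard_inversionSet (w : W) : ℓ w = (cs.inversionSet w).ncard := by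
  obtain ⟨ω, hω, rfl⟩ := cs.exists_isReduced w
  rw [inversionSet_wordProd cs hω, Set.ncard_coe_finset,
    toFinset_card_of_nodup hω.nodup_rightInvSeq, length_rightInvSeq, hω.eq]

theorem inversionSet_finite (w : W) : (cs.inversionSet w).Finite := by
  obtain ⟨ω, hω, rfl⟩ := cs.exists_isReduced w
  rw [inversionSet_wordProd cs hω]
  exact Finset.finite_toSet _

theorem length_mul_lt_of_mem_inversionSet {w t : W} (ht : t ∈ cs.inversionSet w) :
    ℓ (w * t) < ℓ w := by
  obtain ⟨ω, hω, rfl⟩ := cs.exists_isReduced w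
  rw [inversionSet_wordProd cs hω, Finset.mem_coe, mem_toFinset] at ht
  exact (cs.isRightInversion_of_mem_rightInvSeq hω ht).2

theorem length_mul_of_disjoint {a b : W}
    (h : Disjoint (MulAut.conj b ⁻¹' cs.inversionSet a) (cs.inversionSet b)) :
    ℓ (a * b) = ℓ a + ℓ b := by
  rw [length_eq_ncard_inversionSet, cs.length_eq_ncard_inversionSet a,
    cs.length_eq_ncard_inversionSet b, inversionSet_mul, h.symmDiff_eq_sup]
  refine (Set.ncard_union_eq h ((cs.inversionSet_finite a).preimage
    (MulAut.conj b).injective.injOn) (cs.inversionSet_finite b)).trans ?_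
  rw [Set.ncard_preimage_of_injective_subset_range (MulAut.conj b).injective
    (by simp [(MulAut.conj b).surjective.range_eq])]

theorem inversionSet_subset_closure {J : Set B} {p : W}
    (hp : p ∈ Subgroup.closure (cs.simple '' J)) :
    cs.inversionSet p ⊆ Subgroup.closure (cs.simple '' J) := by
  set H := Subgroup.closure (cs.simple '' J)
  have hsimple : ∀ x ∈ cs.simple '' J, cs.inversionSet x ⊆ H := by
    rintro _ ⟨i, hi, rfl⟩
    rw [inversionSet_simple, Set.singleton_subset_iff]
    exact Subgroup.subset_closure ⟨i, hi, rfl⟩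
  induction hp using Subgroup.closure_induction'' with
  | mem x hx => exact hsimple x hx
  | inv_mem x hx =>
    obtain ⟨i, hi, rfl⟩ := hx
    rw [inv_simple]
    exact hsimple _ ⟨i, hi, rfl⟩
  | one => simp [inversionSet_one]
  | mul x y _ hy ihx ihy =>
    intro t ht
    rcases Set.symmDiff_subset_union (cs.inversionSet_mul x y ▸ ht) with htx | hty
    · simpa [mul_assoc] using H.mul_mem (H.mul_mem (H.inv_mem hy) (ihx htx)) hy
    · exact ihy hty

def IsMinimalCosetRep (J : Set B) (u : W) : Prop :=
  ∀ v, u⁻¹ * v ∈ Subgroup.closure (cs.simple '' J) → ℓ u ≤ ℓ v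

section IsMinimalCosetRep

variable {cs} {J : Set B} {u : W}

theorem IsMinimalCosetRep.disjoint_inversionSet (hu : cs.IsMinimalCosetRep J u) :
    Disjoint (cs.inversionSet u) (Subgroup.closure (cs.simple '' J)) :=
  Set.disjoint_left.mpr fun t ht htJ ↦
    (cs.length_mul_lt_of_mem_inversionSet ht).not_ge (hu _ (by simpa using htJ))

theorem IsMinimalCosetRep.length_mul (hu : cs.IsMinimalCosetRep J u) {p : W}
    (hp : p ∈ Subgroup.closure (cs.simple '' J)) : ℓ (u * p) = ℓ u + ℓ p := by
  set H := Subgroup.closure (cs.simple '' J)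
  refine cs.length_mul_of_disjoint (Set.disjoint_left.mpr fun t htu htp ↦ ?_)
  have htH : t ∈ H := cs.inversionSet_subset_closure hp htp
  exact Set.disjoint_left.mp hu.disjoint_inversionSet htu
    (H.mul_mem (H.mul_mem hp htH) (H.inv_mem hp))

theorem IsMinimalCosetRep.eq (hu : cs.IsMinimalCosetRep J u) {v : W}
    (hv : u⁻¹ * v ∈ Subgroup.closure (cs.simple '' J)) (hlen : ℓ v ≤ ℓ u) : v = u := by
  have hadd := hu.length_mul hv
  rw [mul_inv_cancel_left] at hadd
  exact (inv_mul_eq_one.mp (cs.length_eq_zero_iff.mp (by omega))).symm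

end IsMinimalCosetRep

section Homomorphisms

variable {B' W' : Type*} [Group W'] {M' : CoxeterMatrix B'} (cs' : CoxeterSystem M' W')
  (f : W →* W') (g : B → B')

theorem map_wordProd (hf : ∀ i, f (s i) = cs'.simple (g i)) (ω : List B) :
    f (π ω) = cs'.wordProd (ω.map g) := by
  rw [wordProd, map_list_prod, map_map, wordProd, map_map]
  exact congrArg _ (map_congr_left fun i _ ↦ hf i)

theorem length_map_le (hf : ∀ i, f (s i) = cs'.simple (g i)) (w : W) :
    cs'.length (f w) ≤ ℓ w := by
  obtain ⟨ω, hω, rfl⟩ := cs.exists_isReduced w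
  calc cs'.length (f (π ω)) ≤ (ω.map g).length := by
        rw [cs.map_wordProd cs' f g hf]
        exact cs'.length_wordProd_le _
    _ = ℓ (π ω) := by rw [length_map, hω.eq]

theorem map_mem_closure (hf : ∀ i, f (s i) = cs'.simple (g i)) {J : Set B} {J' : Set B'}
    (hJ : ∀ i ∈ J, g i ∈ J') {p : W} (hp : p ∈ Subgroup.closure (cs.simple '' J)) :
    f p ∈ Subgroup.closure (cs'.simple '' J') := by
  have hle : (Subgroup.closure (cs.simple '' J)).map f ≤ Subgroup.closure (cs'.simple '' J') := by
    rw [MonoidHom.map_closure]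
    refine Subgroup.closure_mono ?_
    rintro _ ⟨_, ⟨i, hi, rfl⟩, rfl⟩
    exact ⟨g i, hJ i hi, (hf i).symm⟩
  exact hle (Subgroup.mem_map_of_mem f hp)

end Homomorphisms

end CoxeterSystem

theorem sigma_fixed_cosets_general (B : Type*) (W : Type*) [Group W]
    (M : CoxeterMatrix B) (cs : CoxeterSystem M W)
    (J : Set B) (σ : W ≃* W) (π : Equiv.Perm B)
    (hπ : ∀ i : B, σ (cs.simple i) = cs.simple (π i))
    (hπJ : ∀ i ∈ J, π i ∈ J) :
    (∀ w : W, w⁻¹ * σ w ∈ Subgroup.closure (cs.simple '' J) →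
      ∃ w₀ : W, w⁻¹ * w₀ ∈ Subgroup.closure (cs.simple '' J) ∧ σ w₀ = w₀ ∧
        ∀ v : W, w⁻¹ * v ∈ Subgroup.closure (cs.simple '' J) → cs.length w₀ ≤ cs.length v) ∧
      (∀ w w' : W, σ w = w → σ w' = w' →
        w⁻¹ * w' ∈ Subgroup.closure (cs.simple '' J) →
        ∃ u : W, σ u = u ∧ u ∈ Subgroup.closure (cs.simple '' J) ∧ w' = w * u) := by
  set H := Subgroup.closure (cs.simple '' J)
  refine ⟨fun w hw ↦ ?_, fun w w' hw hw' hww' ↦ ⟨w⁻¹ * w', by simp [hw, hw'], hww', by group⟩⟩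
  obtain ⟨w₀, hw₀, hmin⟩ := (measure cs.length).wf.has_min {v | w⁻¹ * v ∈ H} ⟨w, by simp⟩
  replace hmin : ∀ v, w⁻¹ * v ∈ H → cs.length w₀ ≤ cs.length v :=
    fun v hv ↦ not_lt.mp (hmin v hv)
  have hmin₀ : cs.IsMinimalCosetRep J w₀ :=
    fun v hv ↦ hmin v (by simpa [mul_assoc] using H.mul_mem hw₀ hv)
  have hσw₀ : w₀⁻¹ * σ w₀ ∈ H := by
    have hσ := cs.map_mem_closure cs σ.toMonoidHom π hπ hπJ hw₀
    simpa [mul_assoc] using H.mul_mem (H.mul_mem (H.inv_mem hw₀) hw) hσ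
  exact ⟨w₀, hw₀, hmin₀.eq hσw₀ (cs.length_map_le cs σ.toMonoidHom π hπ w₀), hmin⟩

/-- Let `(W,S)` be a Coxeter system with `S` finite, `W_J` a standard
parabolic subgroup, and `σ` an automorphism of `W` permuting the simple reflections and
stabilizing `J`. Then the natural map `W^σ/(W_J)^σ → (W/W_J)^σ` is a bijection: every
`σ`-stable coset `wW_J` contains a `σ`-fixed element — in fact one of minimal length —
and two `σ`-fixed elements of the same coset differ by a `σ`-fixed element of `W_J`. -/
theorem sigma_fixed_cosets (B : Type*) [Finite B] (W : Type*) [Group W]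
    (M : CoxeterMatrix B) (cs : CoxeterSystem M W)
    (J : Set B) (σ : W ≃* W) (π : Equiv.Perm B)
    (hπ : ∀ i : B, σ (cs.simple i) = cs.simple (π i))
    (hπJ : ∀ i ∈ J, π i ∈ J) :
    (∀ w : W, w⁻¹ * σ w ∈ Subgroup.closure (cs.simple '' J) →
      ∃ w₀ : W, w⁻¹ * w₀ ∈ Subgroup.closure (cs.simple '' J) ∧ σ w₀ = w₀ ∧
        ∀ v : W, w⁻¹ * v ∈ Subgroup.closure (cs.simple '' J) → cs.length w₀ ≤ cs.length v) ∧
      (∀ w w' : W, σ w = w → σ w' = w' →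
        w⁻¹ * w' ∈ Subgroup.closure (cs.simple '' J) →
        ∃ u : W, σ u = u ∧ u ∈ Subgroup.closure (cs.simple '' J) ∧ w' = w * u) :=
  sigma_fixed_cosets_general B W M cs J σ π hπ hπJ
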